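/- arXiv:0803.2369 — 3 statements merged into one kernel-verified Lean document; each statement's English description precedes it below -/
import Mathlib

section
/- Let A be a commutative ring, I an ideal of A not containing 1, and J an ideal of A. Define ν_I(J) = sup{n ∈ ℕ : J ⊆ I^n} (with value ∞ if J ⊆ I^n for all n). Then the sequence u_k = ν_I(J^k)/k converges in ℝ≥0 ∪ {∞} as k → ∞. -/
/-!
`k ↦ ν_I(Jᵏ)` is superadditive, since `J₁ ⊆ Iᵖ` and `J₂ ⊆ I^q` give `J₁ J₂ ⊆ I^(p+q)`, so the
claim is Fekete's lemma in `ℝ≥0∞`: superadditivity forces `a n ≥ ⌊n/k⌋ a k`, hence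
`liminf a n / n ≥ a k / k` for every `k ≥ 1`, while `limsup a n / n ≤ sup_k a k / k` trivially.
Working in `ℝ≥0∞` covers the case of infinite orders at no extra cost.
-/

open Filter ENNReal

/-- The `I`-adic order `ν_I(J)` of an ideal `J`: the supremum of the `n` with `J ⊆ Iⁿ`,
as an extended nonnegative real (`∞` if `J ⊆ Iⁿ` for all `n`). -/
noncomputable def idealOrd {A : Type*} [CommRing A] (I J : Ideal A) : ℝ≥0∞ :=
  ⨆ n ∈ {n : ℕ | J ≤ I ^ n}, (n : ℝ≥0∞)

/-- `ν̄_I(J) = lim_{k→∞} ν_I(Jᵏ)/k`.  (The limit exists, so it equals the `limsup`,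
which we use as the definition.) -/
noncomputable def idealNubar {A : Type*} [CommRing A] (I J : Ideal A) : ℝ≥0∞ :=
  Filter.atTop.limsup fun k : ℕ => idealOrd I (J ^ k) / (k : ℝ≥0∞)

open Topology

theorem tendsto_natCast_div_div_atTop (k : ℕ) :
    Tendsto (fun n : ℕ => ((n / k : ℕ) : ℝ) / n) atTop (𝓝 (k : ℝ)⁻¹) := by
  have := (tendsto_nat_floor_mul_div_atTop (inv_nonneg.2 k.cast_nonneg)).comp
    (tendsto_natCast_atTop_atTop (R := ℝ))
  simpa [Function.comp_def, inv_mul_eq_div, Nat.floor_div_eq_div] using this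

theorem ENNReal.tendsto_natCast_div_div_atTop {k : ℕ} (hk : k ≠ 0) :
    Tendsto (fun n : ℕ => ((n / k : ℕ) : ℝ≥0∞) / n) atTop (𝓝 (k : ℝ≥0∞)⁻¹) := by
  have hk' : (0 : ℝ) < k := by positivity
  have := ENNReal.tendsto_ofReal (_root_.tendsto_natCast_div_div_atTop k)
  rw [ENNReal.ofReal_inv_of_pos hk', ENNReal.ofReal_natCast] at this
  refine this.congr' ?_
  filter_upwards [eventually_gt_atTop 0] with n hn
  rw [ENNReal.ofReal_div_of_pos (by exact_mod_cast hn), ENNReal.ofReal_natCast,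
    ENNReal.ofReal_natCast]

namespace ENNReal

variable {a : ℕ → ℝ≥0∞}

theorem monotone_of_superadditive (h : ∀ m n, a m + a n ≤ a (m + n)) : Monotone a :=
  monotone_nat_of_le_succ fun n => le_self_add.trans (h n 1)

theorem natCast_mul_le_of_superadditive (h : ∀ m n, a m + a n ≤ a (m + n)) (q k : ℕ) :
    q * a k ≤ a (q * k) := by
  induction q with
  | zero => simp
  | succ q ih =>
    calc ((q + 1 : ℕ) : ℝ≥0∞) * a k = q * a k + a k := by push_cast; ring
      _ ≤ a (q * k) + a k := by gcongr
      _ ≤ a ((q + 1) * k) := by rw [add_mul, one_mul]; exact h _ _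

theorem div_le_liminf_of_superadditive (h : ∀ m n, a m + a n ≤ a (m + n)) {k : ℕ}
    (hk : k ≠ 0) : a k / k ≤ liminf (fun n : ℕ => a n / n) atTop := by
  have hlim : Tendsto (fun n : ℕ => ((n / k : ℕ) : ℝ≥0∞) / n * a k) atTop
      (𝓝 ((k : ℝ≥0∞)⁻¹ * a k)) :=
    ENNReal.Tendsto.mul_const (tendsto_natCast_div_div_atTop hk) (Or.inl (by simp))
  have hle (n : ℕ) : ((n / k : ℕ) : ℝ≥0∞) / n * a k ≤ a n / n := by
    rw [div_eq_mul_inv, div_eq_mul_inv, mul_right_comm]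
    gcongr
    exact (natCast_mul_le_of_superadditive h _ k).trans
      (monotone_of_superadditive h (Nat.div_mul_le_self n k))
  calc a k / k = (k : ℝ≥0∞)⁻¹ * a k := by rw [div_eq_mul_inv, mul_comm]
    _ = liminf (fun n : ℕ => ((n / k : ℕ) : ℝ≥0∞) / n * a k) atTop := hlim.liminf_eq.symm
    _ ≤ liminf (fun n : ℕ => a n / n) atTop := liminf_le_liminf (.of_forall hle)

/-- Fekete's lemma for superadditive sequences in `ℝ≥0∞`. -/
theorem tendsto_div_iSup_of_superadditive (h : ∀ m n, a m + a n ≤ a (m + n)) :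
    Tendsto (fun n : ℕ => a n / n) atTop (𝓝 (⨆ k : ℕ, a (k + 1) / (k + 1))) := by
  refine tendsto_of_le_liminf_of_limsup_le ?_ ?_
  · exact iSup_le fun k => by exact_mod_cast div_le_liminf_of_superadditive h k.succ_ne_zero
  · refine limsup_le_of_le (by isBoundedDefault) ?_
    filter_upwards [eventually_gt_atTop 0] with n hn
    obtain ⟨k, rfl⟩ := Nat.exists_eq_add_one_of_ne_zero hn.ne'
    exact le_iSup_of_le k (by push_cast; rfl)

end ENNReal

section IdealOrd

variable {A : Type*} [CommRing A] {I : Ideal A}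

theorem le_idealOrd {J : Ideal A} {n : ℕ} (h : J ≤ I ^ n) : (n : ℝ≥0∞) ≤ idealOrd I J :=
  le_iSup₂ (f := fun (n : ℕ) (_ : J ≤ I ^ n) => (n : ℝ≥0∞)) n h

theorem idealOrd_add_idealOrd_le_idealOrd_mul (J₁ J₂ : Ideal A) :
    idealOrd I J₁ + idealOrd I J₂ ≤ idealOrd I (J₁ * J₂) :=
  ENNReal.biSup_add_biSup_le ⟨0, by simp⟩ ⟨0, by simp⟩ fun p hp q hq => by
    exact_mod_cast le_idealOrd (I := I) (n := p + q) (pow_add I p q ▸ Ideal.mul_mono hp hq)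

end IdealOrd

theorem tendsto_idealOrd_pow_div_general {A : Type*} [CommRing A] (I J : Ideal A) :
    ∃ L : ℝ≥0∞, Tendsto (fun k : ℕ => idealOrd I (J ^ k) / (k : ℝ≥0∞)) atTop (nhds L) :=
  ⟨_, ENNReal.tendsto_div_iSup_of_superadditive fun m n =>
    pow_add J m n ▸ idealOrd_add_idealOrd_le_idealOrd_mul _ _⟩

/-- If `I` is a proper ideal of a commutative ring `A` and `J` is any
ideal, the sequence `u_k = ν_I(Jᵏ)/k` converges in `ℝ≥0 ∪ {∞}` as `k → ∞`. -/
theorem tendsto_idealOrd_pow_div {A : Type*} [CommRing A] (I J : Ideal A) (hI : I ≠ ⊤) :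
    ∃ L : ℝ≥0∞, Tendsto (fun k : ℕ => idealOrd I (J ^ k) / (k : ℝ≥0∞)) atTop (nhds L) :=
  tendsto_idealOrd_pow_div_general I J
end

section
/- Let A be a commutative ring, I a proper ideal, and f ∈ A integral over I. Then ν̄_I(f) ≥ 1. -/
open Filter ENNReal Topology

/-- `f` is integral over the ideal `I`: there is an equation
`f^k + a₁ f^(k-1) + ⋯ + a_k = 0` with `aᵢ ∈ Iⁱ` (and `k ≥ 1`). -/
def IsIntegralOverIdeal {A : Type*} [CommRing A] (I : Ideal A) (f : A) : Prop :=
  ∃ (k : ℕ) (a : ℕ → A), 0 < k ∧ (∀ i ∈ Finset.Icc 1 k, a i ∈ I ^ i) ∧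
    f ^ k + ∑ i ∈ Finset.Icc 1 k, a i * f ^ (k - i) = 0

/-!
An equation of integral dependence of degree `k` expresses `fⁿ` (for `n ≥ k`) as a combination
of the `aᵢ fⁿ⁻ⁱ` with `aᵢ ∈ Iⁱ`, so by strong induction `fⁿ ∈ Iⁿ⁻ᵏ`. Hence `ν_I(fⁿ) ≥ n - k`,
and `(n - k)/n → 1`.
-/

theorem Ideal.pow_mem_pow_tsub_of_integral_eq {A : Type*} [CommRing A] {I : Ideal A} {f : A}
    {k : ℕ} {a : ℕ → A} (ha : ∀ i ∈ Finset.Icc 1 k, a i ∈ I ^ i)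
    (heq : f ^ k + ∑ i ∈ Finset.Icc 1 k, a i * f ^ (k - i) = 0) (n : ℕ) :
    f ^ n ∈ I ^ (n - k) := by
  induction n using Nat.strong_induction_on with
  | _ n ih =>
    rcases lt_or_ge n k with hn | hn
    · simp [Nat.sub_eq_zero_of_le hn.le]
    have hrec : f ^ n = -∑ i ∈ Finset.Icc 1 k, a i * f ^ (n - i) := by
      rw [eq_neg_iff_add_eq_zero, ← mul_zero (f ^ (n - k)), ← heq, mul_add, Finset.mul_sum,
        ← pow_add, Nat.sub_add_cancel hn]
      congr 1
      refine Finset.sum_congr rfl fun i hi => ?_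
      rw [Finset.mem_Icc] at hi
      rw [mul_left_comm, ← pow_add]
      congr 2
      omega
    rw [hrec]
    refine neg_mem (Ideal.sum_mem _ fun i hi => ?_)
    have hi' := Finset.mem_Icc.1 hi
    refine Ideal.pow_le_pow_right (n := i + (n - i - k)) (by omega) ?_
    rw [pow_add]
    exact Ideal.mul_mem_mul (ha i hi) (ih (n - i) (by omega))

theorem natCast_le_idealOrd {A : Type*} [CommRing A] {I J : Ideal A} {n : ℕ} (h : J ≤ I ^ n) :
    (n : ℝ≥0∞) ≤ idealOrd I J :=
  le_biSup (fun m : ℕ => (m : ℝ≥0∞)) (show n ∈ {m : ℕ | J ≤ I ^ m} from h)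

theorem ENNReal.tendsto_natCast_tsub_div_self (c : ℕ) :
    Tendsto (fun n : ℕ => ((n - c : ℕ) : ℝ≥0∞) / n) atTop (𝓝 1) := by
  have hz : Tendsto (fun n : ℕ => (c : ℝ≥0∞) / n) atTop (𝓝 0) := by
    simpa [div_eq_mul_inv] using
      ENNReal.Tendsto.const_mul ENNReal.tendsto_inv_nat_nhds_zero (Or.inr (natCast_ne_top c))
  have hone : Tendsto (fun n : ℕ => 1 - (c : ℝ≥0∞) / n) atTop (𝓝 1) := by
    simpa using ENNReal.Tendsto.sub tendsto_const_nhds hz (Or.inl one_ne_top)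
  refine hone.congr' ?_
  filter_upwards [eventually_gt_atTop 0] with n hn
  have hn0 : (n : ℝ≥0∞) ≠ 0 := by exact_mod_cast hn.ne'
  rw [ENNReal.natCast_sub, ENNReal.sub_div fun _ _ => hn0, ENNReal.div_self hn0 (natCast_ne_top n)]

theorem one_le_idealNubar_of_pow_le_pow_tsub {A : Type*} [CommRing A] {I J : Ideal A} (c : ℕ)
    (h : ∀ n, J ^ n ≤ I ^ (n - c)) : 1 ≤ idealNubar I J :=
  calc (1 : ℝ≥0∞) = atTop.limsup fun n : ℕ => ((n - c : ℕ) : ℝ≥0∞) / n :=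
        (ENNReal.tendsto_natCast_tsub_div_self c).limsup_eq.symm
    _ ≤ idealNubar I J := limsup_le_limsup <| Eventually.of_forall fun n =>
        ENNReal.div_le_div_right (natCast_le_idealOrd (h n)) _

theorem one_le_nubar_of_isIntegralOverIdeal_general {A : Type*} [CommRing A]
    (I : Ideal A) (f : A) (hf : IsIntegralOverIdeal I f) :
    1 ≤ idealNubar I (Ideal.span {f}) := by
  obtain ⟨k, a, -, ha, heq⟩ := hf
  refine one_le_idealNubar_of_pow_le_pow_tsub k fun n => ?_
  rw [Ideal.span_singleton_pow, Ideal.span_singleton_le_iff_mem]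
  exact Ideal.pow_mem_pow_tsub_of_integral_eq ha heq n

/-- If `f` is integral over the proper ideal `I`, then `ν̄_I(f) ≥ 1`. -/
theorem one_le_nubar_of_isIntegralOverIdeal {A : Type*} [CommRing A]
    (I : Ideal A) (hI : I ≠ ⊤) (f : A) (hf : IsIntegralOverIdeal I f) :
    1 ≤ idealNubar I (Ideal.span {f}) :=
  one_le_nubar_of_isIntegralOverIdeal_general I f hf
end

section
/- Let A be a Noetherian ring containing ℚ (characteristic 0) and I an ideal containing at least one non-zerodivisor. Then I admits a finite generating set consisting entirely of non-zerodivisors. -/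
/-!
The zerodivisors of a Noetherian ring are the union of its finitely many associated primes.
Fix a non-zerodivisor `r ∈ I`. By Davis' prime avoidance every generator `g` of `I` can be moved
to `g + a * r` outside all associated primes, i.e. to a non-zerodivisor, and these elements
together with `r` still generate `I`.
-/

open nonZeroDivisors

namespace Ideal

variable {R : Type*} [CommRing R]

/- Davis' prime avoidance. The witness `y` is taken from `J * ∏ q ∈ U, q` but outside every
prime of `T`; primes below some member of `T` are then avoided by `x + y` for free. -/
theorem exists_mem_forall_add_notMem {s : Finset (Ideal R)} (hs : ∀ p ∈ s, p.IsPrime)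
    {J : Ideal R} {x : R} (hJ : ∀ p ∈ s, x ∈ p → ¬J ≤ p) :
    ∃ y ∈ J, ∀ p ∈ s, x + y ∉ p := by
  classical
  set T := s.filter (x ∈ ·)
  set U := s.filter fun q => x ∉ q ∧ ∀ p ∈ T, ¬q ≤ p
  have hKT : ∀ p ∈ T, ¬J * ∏ q ∈ U, q ≤ p := by
    intro p hp
    obtain ⟨hps, hxp⟩ := Finset.mem_filter.mp hp
    rw [(hs p hps).mul_le, (hs p hps).prod_le, not_or, not_exists]
    exact ⟨hJ p hps hxp, fun q ⟨hq, hqp⟩ => (Finset.mem_filter.mp hq).2.2 p hp hqp⟩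
  obtain ⟨y, hyK, hyT⟩ : ∃ y ∈ J * ∏ q ∈ U, q, ∀ p ∈ T, y ∉ p := by
    by_contra! hcover
    obtain ⟨p, hp, hle⟩ := (subset_union_prime (f := id) ⊥ ⊥
      (fun p hp _ _ => hs p (Finset.mem_filter.mp hp).1)).mp fun y hy =>
        let ⟨p, hp, hyp⟩ := hcover y hy
        Set.mem_biUnion (Finset.mem_coe.mpr hp) hyp
    exact hKT p hp hle
  refine ⟨y, mul_le_left hyK, fun p hp hxy => ?_⟩
  by_cases hxp : x ∈ p
  · exact hyT p (Finset.mem_filter.mpr ⟨hp, hxp⟩) ((Ideal.add_mem_iff_right p hxp).mp hxy)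
  by_cases hpT : ∃ p' ∈ T, p ≤ p'
  · obtain ⟨p', hp', hpp'⟩ := hpT
    exact hyT p' hp'
      ((Ideal.add_mem_iff_right p' (Finset.mem_filter.mp hp').2).mp (hpp' hxy))
  · push Not at hpT
    have hyp : y ∈ p := (mul_le_right.trans (prod_le_inf.trans
      (Finset.inf_le (Finset.mem_filter.mpr ⟨hp, hxp, hpT⟩)))) hyK
    exact hxp ((Ideal.add_mem_iff_left p hyp).mp hxy)

theorem span_insert_image_add_mul (r : R) (a : R → R) (T : Set R) :
    span (insert r ((fun g => g + a g * r) '' T)) = span (insert r T) := by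
  refine le_antisymm (span_le.mpr ?_) (span_le.mpr ?_)
  · rintro _ (rfl | ⟨g, hg, rfl⟩)
    · exact subset_span (Set.mem_insert _ _)
    · exact add_mem (subset_span (Set.mem_insert_of_mem _ hg))
        (mul_mem_left _ _ (subset_span (Set.mem_insert _ _)))
  · rintro g (rfl | hg)
    · exact subset_span (Set.mem_insert _ _)
    · have hmem : g + a g * r ∈ span (insert r ((fun g => g + a g * r) '' T)) :=
        subset_span (Set.mem_insert_of_mem _ ⟨g, hg, rfl⟩)
      simpa using sub_mem hmem (mul_mem_left _ (a g) (subset_span (Set.mem_insert _ _)))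

end Ideal

theorem exists_add_mul_mem_nonZeroDivisors {A : Type*} [CommRing A] [IsNoetherianRing A]
    {r : A} (hr : r ∈ A⁰) (x : A) : ∃ a : A, x + a * r ∈ A⁰ := by
  classical
  have hfin := associatedPrimes.finite A A
  have hzd : ∀ z, z ∉ A⁰ ↔ ∃ p ∈ associatedPrimes A A, z ∈ p := fun z => by
    change z ∈ ((A⁰ : Set A))ᶜ ↔ _
    rw [← biUnion_associatedPrimes_eq_compl_nonZeroDivisors, Set.mem_iUnion₂]
    simp only [exists_prop, SetLike.mem_coe]
  obtain ⟨y, hy, hxy⟩ := Ideal.exists_mem_forall_add_notMem (s := hfin.toFinset)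
    (J := Ideal.span {r}) (x := x) (fun p hp => (hfin.mem_toFinset.mp hp).isPrime)
    fun p hp _ hle =>
      (hzd r).mpr ⟨p, hfin.mem_toFinset.mp hp, hle (Ideal.mem_span_singleton_self r)⟩ hr
  obtain ⟨a, rfl⟩ := Ideal.mem_span_singleton'.mp hy
  refine ⟨a, not_not.mp fun h => ?_⟩
  obtain ⟨p, hp, hmem⟩ := (hzd _).mp h
  exact hxy p (hfin.mem_toFinset.mpr hp) hmem

theorem exists_nonZeroDivisor_generating_set_general {A : Type*} [CommRing A]
    [IsNoetherianRing A] (I : Ideal A)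
    (h : ∃ r ∈ I, r ∈ nonZeroDivisors A) :
    ∃ s : Finset A, (∀ x ∈ s, x ∈ nonZeroDivisors A) ∧ I = Ideal.span (s : Set A) := by
  classical
  obtain ⟨r, hrI, hr⟩ := h
  obtain ⟨T, rfl⟩ := (IsNoetherian.noetherian I : I.FG)
  choose a ha using exists_add_mul_mem_nonZeroDivisors hr
  refine ⟨insert r (T.image fun g => g + a g * r), ?_, ?_⟩
  · simp only [Finset.forall_mem_insert, Finset.forall_mem_image]
    exact ⟨hr, fun g _ => ha g⟩
  · rw [Finset.coe_insert, Finset.coe_image, Ideal.span_insert_image_add_mul,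
      Ideal.span_insert, sup_eq_right.mpr ((Ideal.span_singleton_le_iff_mem _).mpr hrI)]

/-- A Noetherian ring of characteristic zero: every ideal containing a
non-zerodivisor admits a finite generating set consisting of non-zerodivisors. -/
theorem exists_nonZeroDivisor_generating_set {A : Type*} [CommRing A]
    [IsNoetherianRing A] [CharZero A] (I : Ideal A)
    (h : ∃ r ∈ I, r ∈ nonZeroDivisors A) :
    ∃ s : Finset A, (∀ x ∈ s, x ∈ nonZeroDivisors A) ∧ I = Ideal.span (s : Set A) :=
  exists_nonZeroDivisor_generating_set_general I h
end
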